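/- Define H : ℝ² → ℝ by H(a, b) = (1/2)·∫₀^{π/2} (max((√3/2)(a·cos φ + b·sin φ), 0))² · cos φ dφ. Then for all real numbers ṡ, ν̇ with 0 < ṡ ≤ ν̇, the Legendre–Fenchel transform satisfies: sup over (a, b) ∈ ℝ² of (a·ṡ + b·ν̇ − H(a, b)) = (1/2)·(ṡ + ν̇²/ṡ)². -/

import Mathlib

open Real

lemma myderiv1 (A B x : ℝ) :
    HasDerivAt (fun y => A*(sin y - sin y^3/3) - B*(cos y^3/3))
      ((A * cos x + B * sin x) * cos x ^ 2) x := by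
  have h1 := Real.hasDerivAt_sin x
  have h2 := Real.hasDerivAt_cos x
  have h := ((h1.sub ((h1.pow 3).div_const 3)).const_mul A).sub
      (((h2.pow 3).div_const 3).const_mul B)
  refine h.congr_deriv ?_
  symm
  have hp := sin_sq_add_cos_sq x
  push_cast
  linear_combination (A * cos x) * hp

lemma myderiv2 (A B x : ℝ) :
    HasDerivAt (fun y => B*(sin y^3/3) - A*(cos y^3/3))
      ((A * cos x + B * sin x) * (sin x * cos x)) x := by
  have h1 := Real.hasDerivAt_sin x
  have h2 := Real.hasDerivAt_cos x
  have h := (((h1.pow 3).div_const 3).const_mul B).sub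
      (((h2.pow 3).div_const 3).const_mul A)
  refine h.congr_deriv ?_
  symm
  push_cast
  ring

lemma myderiv3 (A B x : ℝ) :
    HasDerivAt (fun y => A^2*(sin y - sin y^3/3) - (2*A*B)*(cos y^3/3) + B^2*(sin y^3/3))
      ((A * cos x + B * sin x)^2 * cos x) x := by
  have h1 := Real.hasDerivAt_sin x
  have h2 := Real.hasDerivAt_cos x
  have h := (((h1.sub ((h1.pow 3).div_const 3)).const_mul (A^2)).sub
      (((h2.pow 3).div_const 3).const_mul (2*A*B))).add
      (((h1.pow 3).div_const 3).const_mul (B^2))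
  refine h.congr_deriv ?_
  symm
  have hp := sin_sq_add_cos_sq x
  push_cast
  linear_combination (A^2 * cos x) * hp

lemma myint1 (A B u w : ℝ) :
    ∫ x in u..w, (A * cos x + B * sin x) * cos x ^ 2
    = (A*(sin w - sin w^3/3) - B*(cos w^3/3)) - (A*(sin u - sin u^3/3) - B*(cos u^3/3)) := by
  apply intervalIntegral.integral_eq_sub_of_hasDerivAt (fun x _ => myderiv1 A B x)
  apply Continuous.intervalIntegrable
  continuity

lemma myint2 (A B u w : ℝ) :
    ∫ x in u..w, (A * cos x + B * sin x) * (sin x * cos x)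
    = (B*(sin w^3/3) - A*(cos w^3/3)) - (B*(sin u^3/3) - A*(cos u^3/3)) := by
  apply intervalIntegral.integral_eq_sub_of_hasDerivAt (fun x _ => myderiv2 A B x)
  apply Continuous.intervalIntegrable
  continuity

lemma myint3 (A B u w : ℝ) :
    ∫ x in u..w, (A * cos x + B * sin x)^2 * cos x
    = (A^2*(sin w - sin w^3/3) - (2*A*B)*(cos w^3/3) + B^2*(sin w^3/3))
      - (A^2*(sin u - sin u^3/3) - (2*A*B)*(cos u^3/3) + B^2*(sin u^3/3)) := by
  apply intervalIntegral.integral_eq_sub_of_hasDerivAt (fun x _ => myderiv3 A B x)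
  apply Continuous.intervalIntegrable
  continuity

lemma split_eval (p : ℝ) (h0 : 0 ≤ p) (h1 : p ≤ π/2) (f g : ℝ → ℝ)
    (hf : Continuous f)
    (hzero : ∀ x ∈ Set.Icc (0:ℝ) p, f x = 0)
    (heq : ∀ x ∈ Set.Icc p (π/2), f x = g x) :
    ∫ x in (0:ℝ)..(π/2), f x = ∫ x in p..(π/2), g x := by
  have hsplit : (∫ x in (0:ℝ)..p, f x) + ∫ x in p..(π/2), f x = ∫ x in (0:ℝ)..(π/2), f x :=
    intervalIntegral.integral_add_adjacent_intervals
      (hf.intervalIntegrable 0 p : IntervalIntegrable f MeasureTheory.volume 0 p)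
      (hf.intervalIntegrable p (π/2) : IntervalIntegrable f MeasureTheory.volume p (π/2))
  have hz : ∫ x in (0:ℝ)..p, f x = 0 := by
    rw [intervalIntegral.integral_congr (g := fun _ => (0:ℝ))
      (by rwa [Set.uIcc_of_le h0])]
    simp
  have he : ∫ x in p..(π/2), f x = ∫ x in p..(π/2), g x :=
    intervalIntegral.integral_congr (by rwa [Set.uIcc_of_le h1])
  rw [← hsplit, hz, he, zero_add]

/-- The Hamiltonian of the convexity-constrained Euler–Mumford elastica model
(with `β = 1`) in reduced coordinates. -/
noncomputable def convexElasticaH (a b : ℝ) : ℝ :=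
  (1/2) * ∫ x in (0:ℝ)..(π/2),
    (max ((Real.sqrt 3 / 2) * (a * Real.cos x + b * Real.sin x)) 0)^2
      * Real.cos x

set_option maxHeartbeats 1000000 in
/-- On the branch `0 < ṡ ≤ ν̇`, the Legendre–Fenchel transform of the
convexity-constrained elastica Hamiltonian equals `(1/2)(ṡ + ν̇²/ṡ)²`. -/
theorem stmt_14 (s v : ℝ) (hs : 0 < s) (hsv : s ≤ v) :
    IsLUB {w : ℝ | ∃ a b : ℝ, w = a * s + b * v - convexElasticaH a b}
      ((1/2) * (s + v^2 / s)^2) := by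
  have hv : 0 < v := lt_of_lt_of_le hs hsv
  have hden : (0:ℝ) < s^2 + v^2 := by positivity
  set S : ℝ := (v^2 - s^2)/(s^2+v^2) with hS
  set C : ℝ := 2*s*v/(s^2+v^2) with hC
  have hS0 : 0 ≤ S := by
    apply div_nonneg _ hden.le; nlinarith
  have hS1 : S ≤ 1 := by
    rw [hS, div_le_one hden]; nlinarith
  have hC0 : 0 < C := by rw [hC]; positivity
  set p : ℝ := arcsin S with hp
  have hp0 : 0 ≤ p := arcsin_nonneg.mpr hS0
  have hp1 : p ≤ π/2 := arcsin_le_pi_div_two S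
  have hsinp : sin p = S := sin_arcsin (by linarith) hS1
  have hcosp : cos p = C := by
    rw [hp, cos_arcsin]
    have h12 : 1 - S^2 = C^2 := by rw [hS, hC]; field_simp; ring
    rw [h12, sqrt_sq hC0.le]
  set A : ℝ := (s^4 - v^4)/s^3 with hA
  set B : ℝ := 2*v*(v^2+s^2)/s^2 with hB
  have hB0 : 0 < B := by rw [hB]; positivity
  have hABkey : A * C + B * S = 0 := by
    rw [hA, hB, hC, hS]; field_simp; ring
  have h3 : Real.sqrt 3 * Real.sqrt 3 = 3 := Real.mul_self_sqrt (by norm_num)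
  -- the sign of the optimal linear form
  have hlin : ∀ x : ℝ, A * cos x + B * sin x = (B / C) * Real.sin (x - p) := by
    intro x
    rw [Real.sin_sub, hsinp, hcosp]
    field_simp
    linear_combination (cos x) * hABkey
  have hneg : ∀ x ∈ Set.Icc (0:ℝ) p, A * cos x + B * sin x ≤ 0 := by
    intro x hx
    rw [hlin x]
    have hsn : Real.sin (x - p) ≤ 0 := by
      have h1 : 0 ≤ Real.sin (p - x) := by
        apply Real.sin_nonneg_of_nonneg_of_le_pi (by linarith [hx.2])
        have := Real.pi_pos
        linarith [hx.1]
      have h2 : Real.sin (x - p) = - Real.sin (p - x) := by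
        rw [← Real.sin_neg]; ring_nf
      linarith
    have : 0 ≤ B / C := div_nonneg hB0.le hC0.le
    exact mul_nonpos_of_nonneg_of_nonpos this hsn
  have hpos : ∀ x ∈ Set.Icc p (π/2), 0 ≤ A * cos x + B * sin x := by
    intro x hx
    rw [hlin x]
    have hsn : 0 ≤ Real.sin (x - p) := by
      apply Real.sin_nonneg_of_nonneg_of_le_pi (by linarith [hx.1])
      have := Real.pi_pos
      linarith [hx.2]
    exact mul_nonneg (div_nonneg hB0.le hC0.le) hsn
  -- the optimal dual variable
  have hqzero : ∀ x ∈ Set.Icc (0:ℝ) p,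
      max ((Real.sqrt 3 / 2) * (A * cos x + B * sin x)) 0 = 0 := by
    intro x hx
    apply max_eq_right
    have := hneg x hx
    nlinarith [Real.sqrt_nonneg 3]
  have hqeq : ∀ x ∈ Set.Icc p (π/2),
      max ((Real.sqrt 3 / 2) * (A * cos x + B * sin x)) 0
        = (Real.sqrt 3 / 2) * (A * cos x + B * sin x) := by
    intro x hx
    apply max_eq_left
    have := hpos x hx
    nlinarith [Real.sqrt_nonneg 3]
  have hlc : Continuous (fun x => A * cos x + B * sin x) :=
    (continuous_const.mul Real.continuous_cos).add (continuous_const.mul Real.continuous_sin)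
  have hQc : Continuous (fun x => max ((Real.sqrt 3 / 2) * (A * cos x + B * sin x)) 0) :=
    (continuous_const.mul hlc).max continuous_const
  have hcont1 : Continuous (fun x => (Real.sqrt 3 / 2) * cos x
      * (max ((Real.sqrt 3 / 2) * (A * cos x + B * sin x)) 0) * cos x) :=
    (((continuous_const.mul Real.continuous_cos).mul hQc).mul Real.continuous_cos)
  have hcont2 : Continuous (fun x => (Real.sqrt 3 / 2) * sin x
      * (max ((Real.sqrt 3 / 2) * (A * cos x + B * sin x)) 0) * cos x) :=
    (((continuous_const.mul Real.continuous_sin).mul hQc).mul Real.continuous_cos)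
  have hcont3 : Continuous (fun x =>
      (max ((Real.sqrt 3 / 2) * (A * cos x + B * sin x)) 0)^2 * cos x) :=
    ((hQc.pow 2).mul Real.continuous_cos)
  -- moment A
  have hIA : (∫ x in (0:ℝ)..(π/2),
      (Real.sqrt 3 / 2) * cos x * (max ((Real.sqrt 3 / 2) * (A * cos x + B * sin x)) 0) * cos x)
      = s := by
    rw [split_eval p hp0 hp1 _ (fun x => (3/4) * ((A * cos x + B * sin x) * cos x ^ 2))
      hcont1
      (fun x hx => by rw [hqzero x hx]; ring)
      (fun x hx => by rw [hqeq x hx]; linear_combination ((A*cos x + B*sin x) * cos x^2/4) * h3)]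
    rw [intervalIntegral.integral_const_mul, myint1, sin_pi_div_two, cos_pi_div_two,
      hsinp, hcosp, hA, hB, hC, hS]
    field_simp
    ring
  -- moment B
  have hIB : (∫ x in (0:ℝ)..(π/2),
      (Real.sqrt 3 / 2) * sin x * (max ((Real.sqrt 3 / 2) * (A * cos x + B * sin x)) 0) * cos x)
      = v := by
    rw [split_eval p hp0 hp1 _ (fun x => (3/4) * ((A * cos x + B * sin x) * (sin x * cos x)))
      hcont2
      (fun x hx => by rw [hqzero x hx]; ring)
      (fun x hx => by rw [hqeq x hx]; linear_combination ((A*cos x + B*sin x) * (sin x * cos x)/4) * h3)]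
    rw [intervalIntegral.integral_const_mul, myint2, sin_pi_div_two, cos_pi_div_two,
      hsinp, hcosp, hA, hB, hC, hS]
    field_simp
    ring
  -- moment C
  have hIC : (∫ x in (0:ℝ)..(π/2),
      (max ((Real.sqrt 3 / 2) * (A * cos x + B * sin x)) 0)^2 * cos x)
      = (s^2+v^2)^2/s^2 := by
    rw [split_eval p hp0 hp1 _ (fun x => (3/4) * ((A * cos x + B * sin x)^2 * cos x))
      hcont3
      (fun x hx => by rw [hqzero x hx]; ring)
      (fun x hx => by rw [hqeq x hx]; linear_combination ((A*cos x + B*sin x)^2 * cos x/4) * h3)]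
    rw [intervalIntegral.integral_const_mul, myint3, sin_pi_div_two, cos_pi_div_two,
      hsinp, hcosp, hA, hB, hC, hS]
    field_simp
    ring
  have hH : convexElasticaH A B = (1/2) * ((s^2+v^2)^2/s^2) := by
    rw [convexElasticaH, hIC]
  have hMval : (1/2) * (s + v^2/s)^2 = (1/2)*((s^2+v^2)^2/s^2) := by
    field_simp
  -- upper bound
  have hub : ∀ a b : ℝ, a*s + b*v - convexElasticaH a b ≤ (1/2)*((s^2+v^2)^2/s^2) := by
    intro a b
    have hcontH : Continuous (fun x =>
        (max ((Real.sqrt 3 / 2) * (a * cos x + b * sin x)) 0)^2 * cos x) :=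
      ((((continuous_const.mul ((continuous_const.mul Real.continuous_cos).add
        (continuous_const.mul Real.continuous_sin))).max continuous_const).pow 2).mul
        Real.continuous_cos)
    have hmono : (∫ x in (0:ℝ)..(π/2),
        (a * ((Real.sqrt 3 / 2) * cos x * (max ((Real.sqrt 3 / 2) * (A * cos x + B * sin x)) 0) * cos x)
         + b * ((Real.sqrt 3 / 2) * sin x * (max ((Real.sqrt 3 / 2) * (A * cos x + B * sin x)) 0) * cos x)
         - (1/2) * ((max ((Real.sqrt 3 / 2) * (A * cos x + B * sin x)) 0)^2 * cos x)))
        ≤ ∫ x in (0:ℝ)..(π/2),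
            (1/2) * ((max ((Real.sqrt 3 / 2) * (a * cos x + b * sin x)) 0)^2 * cos x) := by
      apply intervalIntegral.integral_mono_on (by positivity)
      · apply Continuous.intervalIntegrable
        apply Continuous.sub
        · exact (continuous_const.mul hcont1).add (continuous_const.mul hcont2)
        · exact continuous_const.mul hcont3
      · exact (continuous_const.mul hcontH).intervalIntegrable _ _
      · intro x hx
        have hcx : 0 ≤ cos x := by
          apply Real.cos_nonneg_of_mem_Icc
          constructor
          · have := Real.pi_pos; linarith [hx.1]
          · exact hx.2
        have h1 : (Real.sqrt 3 / 2) * (a*cos x+b*sin x)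
            ≤ max ((Real.sqrt 3 / 2)*(a*cos x+b*sin x)) 0 := le_max_left _ _
        have h2 : (0:ℝ) ≤ max ((Real.sqrt 3 / 2)*(a*cos x+b*sin x)) 0 := le_max_right _ _
        have h4 : (0:ℝ) ≤ max ((Real.sqrt 3 / 2)*(A*cos x+B*sin x)) 0 := le_max_right _ _
        nlinarith [mul_nonneg hcx (sq_nonneg (max ((Real.sqrt 3 / 2)*(a*cos x+b*sin x)) 0
            - max ((Real.sqrt 3 / 2)*(A*cos x+B*sin x)) 0)),
          mul_nonneg hcx (mul_nonneg (sub_nonneg.mpr h1) h4)]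
    have hLHS : (∫ x in (0:ℝ)..(π/2),
        (a * ((Real.sqrt 3 / 2) * cos x * (max ((Real.sqrt 3 / 2) * (A * cos x + B * sin x)) 0) * cos x)
         + b * ((Real.sqrt 3 / 2) * sin x * (max ((Real.sqrt 3 / 2) * (A * cos x + B * sin x)) 0) * cos x)
         - (1/2) * ((max ((Real.sqrt 3 / 2) * (A * cos x + B * sin x)) 0)^2 * cos x)))
        = a * s + b * v - (1/2)*((s^2+v^2)^2/s^2) := by
      rw [intervalIntegral.integral_sub (f := fun x => a * ((Real.sqrt 3 / 2) * cos x * (max ((Real.sqrt 3 / 2) * (A * cos x + B * sin x)) 0) * cos x) + b * ((Real.sqrt 3 / 2) * sin x * (max ((Real.sqrt 3 / 2) * (A * cos x + B * sin x)) 0) * cos x))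
          (g := fun x => (1/2) * ((max ((Real.sqrt 3 / 2) * (A * cos x + B * sin x)) 0)^2 * cos x))
          (((continuous_const.mul hcont1).add (continuous_const.mul hcont2)).intervalIntegrable _ _)
          ((continuous_const.mul hcont3).intervalIntegrable _ _),
        intervalIntegral.integral_add (f := fun x => a * ((Real.sqrt 3 / 2) * cos x * (max ((Real.sqrt 3 / 2) * (A * cos x + B * sin x)) 0) * cos x)) (g := fun x => b * ((Real.sqrt 3 / 2) * sin x * (max ((Real.sqrt 3 / 2) * (A * cos x + B * sin x)) 0) * cos x))
          ((continuous_const.mul hcont1).intervalIntegrable _ _)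
          ((continuous_const.mul hcont2).intervalIntegrable _ _),
        intervalIntegral.integral_const_mul, intervalIntegral.integral_const_mul,
        intervalIntegral.integral_const_mul, hIA, hIB, hIC]
    have hRHS : (∫ x in (0:ℝ)..(π/2),
        (1/2) * ((max ((Real.sqrt 3 / 2) * (a * cos x + b * sin x)) 0)^2 * cos x))
        = convexElasticaH a b := by
      rw [intervalIntegral.integral_const_mul, convexElasticaH]
    rw [hLHS, hRHS] at hmono
    linarith
  constructor
  · rintro w ⟨a, b, rfl⟩
    rw [hMval]
    exact hub a b
  · intro w hw
    have hABs : A * s + B * v = (s^2+v^2)^2/s^2 := by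
      rw [hA, hB]; field_simp; ring
    have hmem : A * s + B * v - convexElasticaH A B
        ∈ {w : ℝ | ∃ a b : ℝ, w = a * s + b * v - convexElasticaH a b} := ⟨A, B, rfl⟩
    have h5 := hw hmem
    rw [hMval]
    rw [hH, hABs] at h5
    linarith
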